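/- If E₁, ..., Eₙ are linear functionals on polynomial spaces over disjoint sets of variables, each nonnegative on squares (given by PSD moment matrices), then the product functional E(m) := E₁(m₁)···Eₙ(mₙ), where m = m₁···mₙ is the factorization of a monomial m by variable blocks, is nonnegative on squares of polynomials in the joint variables. -/

import Mathlib

noncomputable section

/-- Projection of a monomial (exponent vector) over the joint variables to block `i`. -/
def blockProj {n k : ℕ} (i : Fin n) (d : (Fin n × Fin k) →₀ ℕ) : Fin k →₀ ℕ :=
  Finsupp.comapDomain (fun j => (i, j)) d (fun _ _ _ _ h => (Prod.ext_iff.mp h).2)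

/-- The product functional: on a monomial it is the product of the block functionals
applied to the block projections, extended linearly. -/
def prodE {n k : ℕ} (Ei : Fin n → (MvPolynomial (Fin k) ℝ →ₗ[ℝ] ℝ))
    (p : MvPolynomial (Fin n × Fin k) ℝ) : ℝ :=
  ∑ d ∈ p.support, p.coeff d * ∏ i, Ei i (MvPolynomial.monomial (blockProj i d) 1)

open MvPolynomial Finset

lemma blockProj_add {n k : ℕ} (i : Fin n) (d e : (Fin n × Fin k) →₀ ℕ) :
    blockProj i (d + e) = blockProj i d + blockProj i e := by
  ext j
  simp [blockProj, Finsupp.comapDomain]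

lemma psd_key {n k : ℕ} (Ei : Fin n → (MvPolynomial (Fin k) ℝ →ₗ[ℝ] ℝ))
    (hEi : ∀ (i : Fin n) (q : MvPolynomial (Fin k) ℝ), 0 ≤ Ei i (q ^ 2))
    {D : Type} [Fintype D] (g : D → ((Fin n × Fin k) →₀ ℕ)) (S : Finset (Fin n)) :
    Matrix.PosSemidef (Matrix.of fun d e : D =>
      ∏ i ∈ S, Ei i (MvPolynomial.monomial (blockProj i (g d) + blockProj i (g e)) 1)) := by
  classical
  induction S using Finset.induction with
  | empty =>
      refine Matrix.PosSemidef.of_dotProduct_mulVec_nonneg ?_ fun x => ?_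
      · ext d e; simp [Matrix.conjTranspose_apply]
      · simp only [Finset.prod_empty, dotProduct, Matrix.mulVec, Matrix.of_apply,
          star_trivial, one_mul]
        rw [← Finset.sum_mul]
        exact mul_self_nonneg _
  | @insert i₀ S ha ih =>
      obtain ⟨B, hB⟩ : ∃ B : Matrix D D ℝ, (Matrix.of fun d e : D =>
          ∏ i ∈ S, Ei i (MvPolynomial.monomial (blockProj i (g d) + blockProj i (g e)) 1)) = B.conjTranspose * B := by
        open MatrixOrder in
        obtain ⟨X, hX, -, hXe⟩ := CFC.exists_sqrt_of_isSelfAdjoint_of_quasispectrumRestricts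
          ih.isHermitian (QuasispectrumRestricts.nnreal_of_nonneg ih.nonneg)
        exact ⟨X, hXe.symm.trans (by rw [← Matrix.star_eq_conjTranspose, hX.star_eq])⟩
      have hN : ∀ d e : D, (∏ i ∈ S, Ei i (monomial (blockProj i (g d) + blockProj i (g e)) 1))
          = ∑ r : D, B r d * B r e := by
        intro d e
        have h := congrFun (congrFun hB d) e
        simpa [Matrix.mul_apply, Matrix.conjTranspose_apply] using h
      refine Matrix.PosSemidef.of_dotProduct_mulVec_nonneg ?_ fun x => ?_
      · ext d e
        simp only [Matrix.conjTranspose_apply, Matrix.of_apply, star_trivial]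
        exact Finset.prod_congr rfl fun i _ => by rw [add_comm]
      · have hq : ∀ r : D,
            Ei i₀ ((∑ d : D, monomial (blockProj i₀ (g d)) (x d * B r d))^2)
            = ∑ d : D, ∑ e : D, (x d * B r d) * (x e * B r e) *
                Ei i₀ (monomial (blockProj i₀ (g d) + blockProj i₀ (g e)) 1) := by
          intro r
          rw [sq, Finset.sum_mul_sum, map_sum]
          refine Finset.sum_congr rfl fun d _ => ?_
          rw [map_sum]
          refine Finset.sum_congr rfl fun e _ => ?_
          rw [monomial_mul,
            show (monomial (blockProj i₀ (g d) + blockProj i₀ (g e)))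
                ((x d * B r d) * (x e * B r e))
              = ((x d * B r d) * (x e * B r e)) •
                (monomial (blockProj i₀ (g d) + blockProj i₀ (g e))) (1:ℝ) by
              rw [smul_monomial, smul_eq_mul, mul_one],
            map_smul, smul_eq_mul]
        simp only [dotProduct, Matrix.mulVec, Matrix.of_apply, star_trivial]
        have lhs_eq : (∑ d : D, x d * ∑ e : D,
              (∏ i ∈ insert i₀ S, Ei i (monomial (blockProj i (g d) + blockProj i (g e)) 1)) * x e)
            = ∑ r : D, Ei i₀ ((∑ d : D, monomial (blockProj i₀ (g d)) (x d * B r d))^2) := by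
          calc (∑ d : D, x d * ∑ e : D,
                (∏ i ∈ insert i₀ S, Ei i (monomial (blockProj i (g d) + blockProj i (g e)) 1)) * x e)
              = ∑ d : D, ∑ e : D, ∑ r : D, (x d * B r d) * (x e * B r e) *
                  Ei i₀ (monomial (blockProj i₀ (g d) + blockProj i₀ (g e)) 1) := by
                refine Finset.sum_congr rfl fun d _ => ?_
                rw [Finset.mul_sum]
                refine Finset.sum_congr rfl fun e _ => ?_
                rw [Finset.prod_insert ha, hN d e]
                simp only [Finset.mul_sum, Finset.sum_mul]
                exact Finset.sum_congr rfl fun r _ => by ring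
            _ = ∑ r : D, ∑ d : D, ∑ e : D, (x d * B r d) * (x e * B r e) *
                  Ei i₀ (monomial (blockProj i₀ (g d) + blockProj i₀ (g e)) 1) := by
                exact Eq.trans (Finset.sum_congr rfl fun d _ => Finset.sum_comm) Finset.sum_comm
            _ = ∑ r : D, Ei i₀ ((∑ d : D, monomial (blockProj i₀ (g d)) (x d * B r d))^2) :=
                Finset.sum_congr rfl fun r _ => (hq r).symm
        rw [lhs_eq]
        exact Finset.sum_nonneg fun r _ => hEi i₀ _

section Aux
variable {n k : ℕ} (Ei : Fin n → (MvPolynomial (Fin k) ℝ →ₗ[ℝ] ℝ))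

lemma prodE_eq_sum_subset (q : MvPolynomial (Fin n × Fin k) ℝ)
    (T : Finset ((Fin n × Fin k) →₀ ℕ)) (hT : q.support ⊆ T) :
    prodE Ei q = ∑ d ∈ T, q.coeff d * ∏ i, Ei i (MvPolynomial.monomial (blockProj i d) 1) := by
  refine Finset.sum_subset hT fun d _ hd => ?_
  rw [MvPolynomial.notMem_support_iff.mp hd, zero_mul]

lemma prodE_add (q₁ q₂ : MvPolynomial (Fin n × Fin k) ℝ) :
    prodE Ei (q₁ + q₂) = prodE Ei q₁ + prodE Ei q₂ := by
  classical
  set T := q₁.support ∪ q₂.support ∪ (q₁ + q₂).support with hTdef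
  rw [prodE_eq_sum_subset Ei q₁ T (Finset.subset_union_left.trans Finset.subset_union_left),
      prodE_eq_sum_subset Ei q₂ T (Finset.subset_union_right.trans Finset.subset_union_left),
      prodE_eq_sum_subset Ei (q₁ + q₂) T Finset.subset_union_right,
      ← Finset.sum_add_distrib]
  exact Finset.sum_congr rfl fun d _ => by rw [MvPolynomial.coeff_add]; ring

lemma prodE_zero : prodE Ei 0 = 0 := by simp [prodE]

lemma prodE_sum {β : Type*} (s : Finset β) (f : β → MvPolynomial (Fin n × Fin k) ℝ) :
    prodE Ei (∑ b ∈ s, f b) = ∑ b ∈ s, prodE Ei (f b) := by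
  classical
  induction s using Finset.induction with
  | empty => simp [prodE_zero]
  | @insert b s hb ih => rw [Finset.sum_insert hb, prodE_add, ih, Finset.sum_insert hb]

lemma prodE_monomial (d : (Fin n × Fin k) →₀ ℕ) (r : ℝ) :
    prodE Ei (monomial d r) = r * ∏ i, Ei i (MvPolynomial.monomial (blockProj i d) 1) := by
  classical
  by_cases hr : r = 0
  · simp [prodE, hr]
  · rw [prodE, MvPolynomial.support_monomial, if_neg hr, Finset.sum_singleton,
      MvPolynomial.coeff_monomial, if_pos rfl]

end Aux

theorem stmt12 (n k : ℕ)
    (Ei : Fin n → (MvPolynomial (Fin k) ℝ →ₗ[ℝ] ℝ))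
    (hEi : ∀ (i : Fin n) (q : MvPolynomial (Fin k) ℝ), 0 ≤ Ei i (q ^ 2))
    (p : MvPolynomial (Fin n × Fin k) ℝ) :
    0 ≤ prodE Ei (p ^ 2) := by
  classical
  have hp2 : p ^ 2 = ∑ d ∈ p.support, ∑ e ∈ p.support,
      monomial (d + e) (coeff d p * coeff e p) := by
    conv_lhs => rw [sq, p.as_sum, Finset.sum_mul_sum]
    exact Finset.sum_congr rfl fun d _ => Finset.sum_congr rfl fun e _ => by rw [monomial_mul]
  have expand : prodE Ei (p ^ 2) = ∑ d ∈ p.support, ∑ e ∈ p.support,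
      (coeff d p * coeff e p) *
        ∏ i, Ei i (monomial (blockProj i d + blockProj i e) 1) := by
    rw [hp2, prodE_sum]
    refine Finset.sum_congr rfl fun d _ => ?_
    rw [prodE_sum]
    refine Finset.sum_congr rfl fun e _ => ?_
    rw [prodE_monomial]
    congr 1
    exact Finset.prod_congr rfl fun i _ => by rw [blockProj_add]
  rw [expand]
  have h := (psd_key Ei hEi (D := ↥p.support) (fun d => (d : (Fin n × Fin k) →₀ ℕ))
      Finset.univ).dotProduct_mulVec_nonneg (fun d => coeff (d : (Fin n × Fin k) →₀ ℕ) p)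
  simp only [dotProduct, Matrix.mulVec, Matrix.of_apply, star_trivial] at h
  rw [← Finset.sum_coe_sort p.support]
  have step : ∀ d : ↥p.support, (∑ e ∈ p.support, (coeff (d : (Fin n × Fin k) →₀ ℕ) p * coeff e p) *
        ∏ i, Ei i (monomial (blockProj i (d : (Fin n × Fin k) →₀ ℕ) + blockProj i e) 1))
      = ∑ e : ↥p.support, (coeff (d : (Fin n × Fin k) →₀ ℕ) p * coeff (e : (Fin n × Fin k) →₀ ℕ) p) *
        ∏ i, Ei i (monomial (blockProj i (d : (Fin n × Fin k) →₀ ℕ) + blockProj i (e : (Fin n × Fin k) →₀ ℕ)) 1) := by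
    intro d
    rw [← Finset.sum_coe_sort p.support]
  calc (∑ d : ↥p.support, ∑ e ∈ p.support, (coeff (d : (Fin n × Fin k) →₀ ℕ) p * coeff e p) *
        ∏ i, Ei i (monomial (blockProj i (d : (Fin n × Fin k) →₀ ℕ) + blockProj i e) 1))
      = ∑ d : ↥p.support, coeff (d : (Fin n × Fin k) →₀ ℕ) p * ∑ e : ↥p.support,
          (∏ i, Ei i (monomial (blockProj i (d : (Fin n × Fin k) →₀ ℕ) + blockProj i (e : (Fin n × Fin k) →₀ ℕ)) 1)) *
          coeff (e : (Fin n × Fin k) →₀ ℕ) p := by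
        refine Finset.sum_congr rfl fun d _ => ?_
        rw [step d, Finset.mul_sum]
        exact Finset.sum_congr rfl fun e _ => by ring
    _ ≥ 0 := h

end
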